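/- Let r ≥ 1. Define the (r+1)×r matrix R_r by (R_r)_{a,b} = (−1)^{b−1} · C(b, a−1), the vector d_r ∈ ℝ^r with entries (d_r)_b = C(r, b−1), and the vector d_{r+1} ∈ ℝ^{r+1} with entries (d_{r+1})_a = C(r+1, a−1). Then R_r · d_r = (−1)^{r+1} · (d_{r+1} − e_{r+1}), where e_{r+1} is the last standard basis vector of ℝ^{r+1}. -/

import Mathlib

open Finset

lemma key (n a : ℕ) :
    ∑ b ∈ Finset.range (n + 1), (-1 : ℝ) ^ b * (n.choose b) * (b.choose a)
      = (-1 : ℝ) ^ n * (if a = n then 1 else 0) := by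
  rcases le_or_gt a n with h | h
  · have h1 : ∑ b ∈ Finset.range (n + 1), (-1 : ℝ) ^ b * (n.choose b) * (b.choose a)
        = ∑ b ∈ Finset.Ico a (n + 1), (-1 : ℝ) ^ b * (n.choose b) * (b.choose a) := by
      rw [Finset.range_eq_Ico, ← Finset.sum_Ico_consecutive _ (Nat.zero_le a)
        (by omega : a ≤ n + 1)]
      have : ∑ b ∈ Finset.Ico 0 a, (-1 : ℝ) ^ b * (n.choose b) * (b.choose a) = 0 := by
        apply Finset.sum_eq_zero
        intro b hb
        simp only [Finset.mem_Ico] at hb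
        rw [Nat.choose_eq_zero_of_lt hb.2]
        simp
      rw [this, zero_add]
    rw [h1, Finset.sum_Ico_eq_sum_range]
    have h2 : ∀ j ∈ Finset.range (n + 1 - a),
        (-1 : ℝ) ^ (a + j) * (n.choose (a + j)) * ((a + j).choose a)
          = ((-1 : ℝ) ^ a * (n.choose a)) * ((-1 : ℝ) ^ j * ((n - a).choose j)) := by
      intro j hj
      simp only [Finset.mem_range] at hj
      have hj' : a + j ≤ n := by omega
      have := Nat.choose_mul (n := n) (Nat.le_add_right a j)
      have hc : (a + j).choose a = (a+j).choose ((a+j) - j) := by congr 1; omega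
      have hmul : (n.choose (a + j) : ℝ) * ((a + j).choose a)
          = (n.choose a : ℝ) * ((n - a).choose j) := by
        have h4 : a + j - a = j := by omega
        rw [h4] at this
        exact_mod_cast congrArg (fun z : ℕ => (z : ℝ)) this
      rw [pow_add]
      linear_combination ((-1 : ℝ) ^ a * (-1 : ℝ) ^ j) * hmul
    rw [Finset.sum_congr rfl h2, ← Finset.mul_sum]
    have h3 : ∑ j ∈ Finset.range (n + 1 - a), (-1 : ℝ) ^ j * ((n - a).choose j)
        = if n - a = 0 then 1 else 0 := by
      have := Int.alternating_sum_range_choose (n := n - a)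
      have hrange : n + 1 - a = (n - a) + 1 := by omega
      rw [hrange]
      exact_mod_cast congrArg (fun z : ℤ => (z : ℝ)) this
    rw [h3]
    rcases eq_or_lt_of_le h with rfl | hlt
    · simp
    · rw [if_neg (by omega), if_neg (by omega), mul_zero, mul_zero]
  · rw [if_neg (by omega), mul_zero]
    apply Finset.sum_eq_zero
    intro b hb
    simp only [Finset.mem_range] at hb
    rw [Nat.choose_eq_zero_of_lt (show b < a by omega)]
    simp

lemma key2 (r A : ℕ) (hA : A ≤ r) :
    ∑ b ∈ Finset.range (r + 1), (-1 : ℝ) ^ b * ((b + 1).choose A) * (r.choose b)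
      = (-1 : ℝ) ^ r * (if A = r then 1 else 0) := by
  rcases A with _ | k
  · have h := key r 0
    simp only [Nat.choose_zero_right, Nat.cast_one, mul_one, one_mul] at h ⊢
    simpa using h
  · have h1 := key r (k + 1)
    have h2 := key r k
    have hs : ∑ b ∈ Finset.range (r + 1), (-1 : ℝ) ^ b * ((b + 1).choose (k + 1)) * (r.choose b)
        = (∑ b ∈ Finset.range (r + 1), (-1 : ℝ) ^ b * (r.choose b) * (b.choose k))
          + (∑ b ∈ Finset.range (r + 1), (-1 : ℝ) ^ b * (r.choose b) * (b.choose (k + 1))) := by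
      rw [← Finset.sum_add_distrib]
      apply Finset.sum_congr rfl
      intro b _
      have : (((b + 1).choose (k + 1) : ℝ)) = (b.choose k) + (b.choose (k + 1)) := by
        exact_mod_cast congrArg (fun z : ℕ => (z : ℝ)) (Nat.choose_succ_succ b k)
      rw [this]; ring
    rw [hs, h1, h2, if_neg (show k ≠ r by omega)]
    ring


/-- With `(R_r)_{a,b} = (-1)^(b-1) C(b, a-1)` of size `(r+1) × r` (1-based),
`(d_r)_b = C(r, b-1)` and `(d_{r+1})_a = C(r+1, a-1)`, one has
`R_r d_r = (-1)^(r+1) (d_{r+1} - e_{r+1})` where `e_{r+1}` is the last standard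
basis vector of `ℝ^(r+1)`. Index `a : Fin r` represents 1-based index `a+1`. -/
theorem R_mulVec_d (r : ℕ) (hr : 1 ≤ r) :
    (Matrix.of fun (a : Fin (r + 1)) (b : Fin r) =>
        ((-1 : ℝ)) ^ (b : ℕ) * (Nat.choose ((b : ℕ) + 1) (a : ℕ))).mulVec
      (fun b : Fin r => (Nat.choose r (b : ℕ) : ℝ))
      = fun a : Fin (r + 1) =>
          ((-1 : ℝ)) ^ (r + 1) *
            ((Nat.choose (r + 1) (a : ℕ) : ℝ) -
              (if (a : ℕ) = r then 1 else 0)) := by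
  funext a
  have ha : (a : ℕ) ≤ r := Nat.lt_succ_iff.mp a.isLt
  simp only [Matrix.mulVec, Matrix.of_apply, dotProduct]
  rw [Fin.sum_univ_eq_sum_range (fun b => (-1 : ℝ) ^ b * ((b + 1).choose (a : ℕ)) * (r.choose b))]
  have hstep := Finset.sum_range_succ
    (fun b => (-1 : ℝ) ^ b * ((b + 1).choose (a : ℕ)) * (r.choose b)) r
  rw [key2 r a ha] at hstep
  simp only [Nat.choose_self, Nat.cast_one, mul_one] at hstep
  rw [pow_succ]
  linear_combination -hstep
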